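/- Let G be a partial cube of VC-dimension at most d and let G' be obtained from G by an isometric expansion with respect to an isometric cover (G¹, G⁰, G²). Then G' has VC-dimension at most d if and only if G⁰ has VC-dimension at most d−1. -/

import Mathlib

open Finset

/-- The hypercube graph on subsets of `Fin m`. -/
def cubeGraph (m : ℕ) : SimpleGraph (Finset (Fin m)) where
  Adj A B := (symmDiff A B).card = 1
  symm := ⟨fun A B h => by show (symmDiff B A).card = 1; rwa [symmDiff_comm]⟩
  loopless := ⟨fun A h => by simp only [symmDiff_self, bot_eq_empty, card_empty] at h; exact absurd h (by norm_num)⟩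

/-- `V` is (the vertex set of) a partial cube isometrically embedded in `Q_m`:
the distance in the induced subgraph equals the Hamming distance. -/
def IsPC {m : ℕ} (V : Set (Finset (Fin m))) : Prop :=
  ∀ u v : V, ((cubeGraph m).induce V).dist u v = (symmDiff u.1 v.1).card

def Shatters {m : ℕ} (V : Set (Finset (Fin m))) (Y : Finset (Fin m)) : Prop :=
  ∀ Z ⊆ Y, ∃ B ∈ V, B ∩ Y = Z

def VCdimLE {m : ℕ} (V : Set (Finset (Fin m))) (d : ℕ) : Prop :=
  ∀ Y : Finset (Fin m), Shatters V Y → Y.card ≤ d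

inductive PCStep {m : ℕ} : Set (Finset (Fin m)) → Set (Finset (Fin m)) → Prop
  | contract (i : Fin m) (V : Set (Finset (Fin m))) :
      PCStep V ((fun B => B.erase i) '' V)
  | restrictPos (i : Fin m) (V : Set (Finset (Fin m))) :
      PCStep V {B ∈ V | i ∈ B}
  | restrictNeg (i : Fin m) (V : Set (Finset (Fin m))) :
      PCStep V {B ∈ V | i ∉ B}

/-- Partial-cube minor relation: a sequence of contractions and restrictions. -/
def PCMinor {m : ℕ} : Set (Finset (Fin m)) → Set (Finset (Fin m)) → Prop :=
  Relation.ReflTransGen PCStep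

/-- `W` is (the vertex set of) a `k`-dimensional subcube of `Q_m`. -/
def IsCubeFam {m : ℕ} (k : ℕ) (W : Set (Finset (Fin m))) : Prop :=
  ∃ (Y X : Finset (Fin m)), Disjoint Y X ∧ X.card = k ∧
    W = {B | ∃ Z ⊆ X, B = Y ∪ Z}

/-- `G` has the cube `Q_k` as a pc-minor. -/
def HasQMinor {m : ℕ} (V : Set (Finset (Fin m))) (k : ℕ) : Prop :=
  ∃ W, PCMinor V W ∧ IsCubeFam k W

def hdist {m : ℕ} (A B : Finset (Fin m)) : ℕ := (symmDiff A B).card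

def IsConvexIn {m : ℕ} (V S : Set (Finset (Fin m))) : Prop :=
  S ⊆ V ∧ ∀ u ∈ S, ∀ v ∈ S, ∀ x ∈ V, hdist u x + hdist x v = hdist u v → x ∈ S

def convexHullIn {m : ℕ} (V S : Set (Finset (Fin m))) : Set (Finset (Fin m)) :=
  ⋂₀ {T | S ⊆ T ∧ IsConvexIn V T}

def IsGatedIn {m : ℕ} (V S : Set (Finset (Fin m))) : Prop :=
  S ⊆ V ∧ ∀ x ∈ V, ∃ g ∈ S, ∀ y ∈ S, hdist x g + hdist g y = hdist x y

/-- The standardly embedded full subdivision `SK_n` in `Q_n`: singletons and pairs. -/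
def SKset (n : ℕ) : Set (Finset (Fin n)) := {B | B.card = 1 ∨ B.card = 2}

/-- A standardly embedded copy of `SK_n` in `Q_m` along the injection `ι`. -/
def skCopy {m : ℕ} (n : ℕ) (ι : Fin n → Fin m) : Set (Finset (Fin m)) :=
  (fun B => B.image ι) '' SKset n


/-- Isometric expansion of a partial cube along a cover `(V1, V0, V2)`:
one copy of `V1`, one copy of `V2` shifted into the new coordinate. -/
def expansion {m : ℕ} (V1 V2 : Set (Finset (Fin m))) : Set (Finset (Fin (m + 1))) :=
  (fun B => B.image Fin.castSucc) '' V1 ∪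
    (fun B => insert (Fin.last m) (B.image Fin.castSucc)) '' V2

/-! A geodesic of `V` from `V1` to `V2` passes through `V0 = V1 ∩ V2`: its first edge not
contained in `V1` lies in `V2` by the cover condition, so the tail of that edge is in `V0`. A vertex
`w` on a geodesic from `u` to `v` satisfies `u ∆ w ⊆ u ∆ v`, so it agrees with `u` and `v` on every
set `Y` on which they agree. Hence if both `V1` and `V2` shatter `Y`, so does `V0`. In the
expansion, the new coordinate separates the copy of `V1` from that of `V2`, so it shatters
`Y ∪ {new}` exactly when both `V1` and `V2` shatter `Y`, and it shatters a set of old coordinates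
only if `V` does. -/

section Hamming

variable {m : ℕ}

lemma hdist_triangle (A B C : Finset (Fin m)) : hdist A C ≤ hdist A B + hdist B C :=
  (card_le_card (symmDiff_triangle A B C)).trans (card_union_le _ _)

lemma eq_of_hdist_eq_zero {A B : Finset (Fin m)} (h : hdist A B = 0) : A = B := by
  rwa [hdist, card_eq_zero, ← bot_eq_empty, symmDiff_eq_bot] at h

lemma symmDiff_subset_symmDiff_of_hdist_add_eq {u w v : Finset (Fin m)}
    (h : hdist u w + hdist w v = hdist u v) : symmDiff u w ⊆ symmDiff u v := by
  set A := symmDiff u w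
  set B := symmDiff w v
  have hAB : symmDiff A B = symmDiff u v := by
    rw [← symmDiff_assoc, symmDiff_symmDiff_cancel_right]
  have hdisj : Disjoint A B := by
    have hcard : #A + #B = #(symmDiff A B) := by rw [hAB]; exact h
    have hsub : #(symmDiff A B) ≤ #(A ∪ B) := card_le_card symmDiff_le_sup
    have := card_union_add_card_inter A B
    rw [disjoint_iff_inter_eq_empty, ← card_eq_zero]
    omega
  calc A ⊆ A ∪ B := subset_union_left
    _ = symmDiff u v := by rw [← hAB, hdisj.symmDiff_eq_sup, sup_eq_union]

lemma inter_eq_inter_of_hdist_add_eq {u w v : Finset (Fin m)} (Y : Finset (Fin m))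
    (h : hdist u w + hdist w v = hdist u v) (huv : u ∩ Y = v ∩ Y) : w ∩ Y = u ∩ Y := by
  ext x
  have hx : x ∈ symmDiff u w → x ∈ symmDiff u v := (symmDiff_subset_symmDiff_of_hdist_add_eq h ·)
  have hux := Finset.ext_iff.1 huv x
  simp only [mem_inter, mem_symmDiff] at hx hux ⊢
  tauto

lemma hdist_le_length {V : Set (Finset (Fin m))} {a b : V}
    (p : ((cubeGraph m).induce V).Walk a b) : hdist a.1 b.1 ≤ p.length := by
  induction p with
  | nil => simp [hdist]
  | @cons a c b hac q ih =>
    have hac : hdist a.1 c.1 = 1 := hac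
    have := hdist_triangle a.1 c.1 b.1
    rw [SimpleGraph.Walk.length_cons]
    omega

end Hamming

section Gate

variable {m : ℕ} {V V1 V2 : Set (Finset (Fin m))}

lemma exists_mem_inter_hdist_add_eq_of_walk
    (hedge : ∀ u ∈ V, ∀ v ∈ V, (cubeGraph m).Adj u v →
      (u ∈ V1 ∧ v ∈ V1) ∨ (u ∈ V2 ∧ v ∈ V2))
    {a b : V} (p : ((cubeGraph m).induce V).Walk a b) (hp : p.length = hdist a.1 b.1)
    (ha : a.1 ∈ V1) (hb : b.1 ∈ V2) :
    ∃ w ∈ V1 ∩ V2, hdist a.1 w + hdist w b.1 = hdist a.1 b.1 := by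
  induction p with
  | nil => exact ⟨_, ⟨ha, hb⟩, by simp [hdist]⟩
  | @cons a c b hac q ih =>
    rcases hedge a.1 a.2 c.1 c.2 hac with ⟨-, hc⟩ | ⟨ha2, -⟩
    · have hac : hdist a.1 c.1 = 1 := hac
      have hq := hdist_le_length q
      have hab := hdist_triangle a.1 c.1 b.1
      rw [SimpleGraph.Walk.length_cons] at hp
      obtain ⟨w, hw, hcwb⟩ := ih (by omega) hc hb
      have := hdist_triangle a.1 w b.1
      have := hdist_triangle a.1 c.1 w
      exact ⟨w, hw, by omega⟩
    · exact ⟨a.1, ⟨ha, ha2⟩, by simp [hdist]⟩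

lemma IsPC.exists_mem_inter_hdist_add_eq (hV : IsPC V) (hcov : V1 ∪ V2 = V)
    (hedge : ∀ u ∈ V, ∀ v ∈ V, (cubeGraph m).Adj u v →
      (u ∈ V1 ∧ v ∈ V1) ∨ (u ∈ V2 ∧ v ∈ V2))
    {u v : Finset (Fin m)} (hu : u ∈ V1) (hv : v ∈ V2) :
    ∃ w ∈ V1 ∩ V2, hdist u w + hdist w v = hdist u v := by
  by_cases huv : hdist u v = 0
  · obtain rfl := eq_of_hdist_eq_zero huv
    exact ⟨u, ⟨hu, hv⟩, by simp [hdist]⟩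
  have hu' : u ∈ V := hcov ▸ Or.inl hu
  have hv' : v ∈ V := hcov ▸ Or.inr hv
  have hdist_eq : ((cubeGraph m).induce V).dist ⟨u, hu'⟩ ⟨v, hv'⟩ = hdist u v :=
    hV ⟨u, hu'⟩ ⟨v, hv'⟩
  obtain ⟨p, hp⟩ := SimpleGraph.exists_walk_of_dist_ne_zero (hdist_eq ▸ huv)
  exact exists_mem_inter_hdist_add_eq_of_walk hedge p (hp.trans hdist_eq) hu hv

lemma Shatters.mono {W : Set (Finset (Fin m))} {Y : Finset (Fin m)} (hVW : V ⊆ W)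
    (h : Shatters V Y) : Shatters W Y := fun Z hZ =>
  let ⟨B, hB, hBY⟩ := h Z hZ
  ⟨B, hVW hB, hBY⟩

lemma IsPC.shatters_inter (hV : IsPC V) (hcov : V1 ∪ V2 = V)
    (hedge : ∀ u ∈ V, ∀ v ∈ V, (cubeGraph m).Adj u v →
      (u ∈ V1 ∧ v ∈ V1) ∨ (u ∈ V2 ∧ v ∈ V2))
    {Y : Finset (Fin m)} (h1 : Shatters V1 Y) (h2 : Shatters V2 Y) :
    Shatters (V1 ∩ V2) Y := by
  intro Z hZ
  obtain ⟨u, hu, huY⟩ := h1 Z hZ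
  obtain ⟨v, hv, hvY⟩ := h2 Z hZ
  obtain ⟨w, hw, hbetween⟩ := hV.exists_mem_inter_hdist_add_eq hcov hedge hu hv
  exact ⟨w, hw, (inter_eq_inter_of_hdist_add_eq Y hbetween (huY.trans hvY.symm)).trans huY⟩

end Gate

section Expansion

variable {m : ℕ} {V1 V2 : Set (Finset (Fin m))}

@[simp] lemma last_notMem_image_castSucc (B : Finset (Fin m)) :
    Fin.last m ∉ B.image Fin.castSucc := by
  simp [Fin.castSucc_ne_last]

@[simp] lemma insert_last_ne_image_castSucc (A B : Finset (Fin m)) :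
    insert (Fin.last m) (A.image Fin.castSucc) ≠ B.image Fin.castSucc :=
  fun h => last_notMem_image_castSucc B (h ▸ mem_insert_self _ _)

lemma insert_last_image_castSucc_inj {B C : Finset (Fin m)} :
    insert (Fin.last m) (B.image Fin.castSucc) = insert (Fin.last m) (C.image Fin.castSucc) ↔
      B = C := by
  refine ⟨fun h => ?_, fun h => h ▸ rfl⟩
  simpa [erase_insert, image_inj (Fin.castSucc_injective m)] using
    congrArg (·.erase (Fin.last m)) h

lemma card_insert_last_image_castSucc (Y : Finset (Fin m)) :
    #(insert (Fin.last m) (Y.image Fin.castSucc)) = #Y + 1 := by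
  rw [card_insert_of_notMem (last_notMem_image_castSucc Y),
    card_image_of_injective _ (Fin.castSucc_injective m)]

lemma exists_eq_image_castSucc_or_eq_insert_last (Y : Finset (Fin (m + 1))) :
    ∃ Y' : Finset (Fin m), Y = Y'.image Fin.castSucc ∨
      Y = insert (Fin.last m) (Y'.image Fin.castSucc) := by
  refine ⟨Y.preimage Fin.castSucc (Fin.castSucc_injective m).injOn, ?_⟩
  by_cases h : Fin.last m ∈ Y
  · right; ext x; induction x using Fin.lastCases <;> simp [h, Fin.castSucc_ne_last]
  · left; ext x; induction x using Fin.lastCases <;> simp [h]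

lemma exists_mem_expansion_inter_image_castSucc_iff {Y Z : Finset (Fin m)} :
    (∃ C ∈ expansion V1 V2, C ∩ Y.image Fin.castSucc = Z.image Fin.castSucc) ↔
      ∃ B ∈ V1 ∪ V2, B ∩ Y = Z := by
  simp [expansion, or_and_right, exists_or, insert_inter_of_notMem,
    ← image_inter _ _ (Fin.castSucc_injective m), image_inj (Fin.castSucc_injective m)]

lemma exists_mem_expansion_inter_insert_last_eq_image_iff {Y Z : Finset (Fin m)} :
    (∃ C ∈ expansion V1 V2,
        C ∩ insert (Fin.last m) (Y.image Fin.castSucc) = Z.image Fin.castSucc) ↔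
      ∃ B ∈ V1, B ∩ Y = Z := by
  simp [expansion, or_and_right, exists_or, inter_insert_of_notMem,
    ← image_inter _ _ (Fin.castSucc_injective m), image_inj (Fin.castSucc_injective m)]

lemma exists_mem_expansion_inter_insert_last_eq_insert_iff {Y Z : Finset (Fin m)} :
    (∃ C ∈ expansion V1 V2, C ∩ insert (Fin.last m) (Y.image Fin.castSucc) =
        insert (Fin.last m) (Z.image Fin.castSucc)) ↔
      ∃ B ∈ V2, B ∩ Y = Z := by
  simp [expansion, or_and_right, exists_or, inter_insert_of_notMem,
    ← image_inter _ _ (Fin.castSucc_injective m), insert_last_image_castSucc_inj,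
    (insert_last_ne_image_castSucc _ _).symm]

lemma Shatters.of_expansion_image_castSucc {Y : Finset (Fin m)}
    (h : Shatters (expansion V1 V2) (Y.image Fin.castSucc)) : Shatters (V1 ∪ V2) Y :=
  fun Z hZ => exists_mem_expansion_inter_image_castSucc_iff.1 <|
    h (Z.image Fin.castSucc) (image_subset_image hZ)

lemma shatters_expansion_insert_last_iff {Y : Finset (Fin m)} :
    Shatters (expansion V1 V2) (insert (Fin.last m) (Y.image Fin.castSucc)) ↔
      Shatters V1 Y ∧ Shatters V2 Y := by
  have hinj := Fin.castSucc_injective m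
  refine ⟨fun h => ⟨fun Z hZ => ?_, fun Z hZ => ?_⟩, fun ⟨h1, h2⟩ X hX => ?_⟩
  · exact exists_mem_expansion_inter_insert_last_eq_image_iff.1 <|
      h _ ((image_subset_image hZ).trans (subset_insert _ _))
  · exact exists_mem_expansion_inter_insert_last_eq_insert_iff.1 <|
      h _ (insert_subset_insert _ (image_subset_image hZ))
  · obtain ⟨Z, rfl | rfl⟩ := exists_eq_image_castSucc_or_eq_insert_last X
    · rw [subset_insert_iff_of_notMem (last_notMem_image_castSucc Z),
        image_subset_image_iff hinj] at hX
      exact exists_mem_expansion_inter_insert_last_eq_image_iff.2 (h1 Z hX)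
    · rw [insert_subset_insert_iff (last_notMem_image_castSucc Z),
        image_subset_image_iff hinj] at hX
      exact exists_mem_expansion_inter_insert_last_eq_insert_iff.2 (h2 Z hX)

end Expansion

theorem stmt4_general (m d : ℕ) (hd : 1 ≤ d) (V V1 V2 : Set (Finset (Fin m)))
    (hV : IsPC V)
    (hcov : V1 ∪ V2 = V)
    (hedge : ∀ u ∈ V, ∀ v ∈ V, (cubeGraph m).Adj u v →
      (u ∈ V1 ∧ v ∈ V1) ∨ (u ∈ V2 ∧ v ∈ V2))
    (hvc : VCdimLE V d) :
    VCdimLE (expansion V1 V2) d ↔ VCdimLE (V1 ∩ V2) (d - 1) := by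
  constructor
  · intro hexp Y hY
    have := hexp _ (shatters_expansion_insert_last_iff.2
      ⟨hY.mono Set.inter_subset_left, hY.mono Set.inter_subset_right⟩)
    rw [card_insert_last_image_castSucc] at this
    omega
  · intro h0 Y hY
    obtain ⟨Y, rfl | rfl⟩ := exists_eq_image_castSucc_or_eq_insert_last Y
    · rw [card_image_of_injective _ (Fin.castSucc_injective m)]
      exact hvc Y (hcov ▸ hY.of_expansion_image_castSucc)
    · obtain ⟨h1, h2⟩ := shatters_expansion_insert_last_iff.1 hY
      have := h0 Y (hV.shatters_inter hcov hedge h1 h2)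
      rw [card_insert_last_image_castSucc]
      omega

/-- The isometric expansion of a partial cube of VC-dimension at most `d` has
VC-dimension at most `d` iff `G⁰ = V1 ∩ V2` has VC-dimension at most `d - 1`. -/
theorem stmt4 (m d : ℕ) (hd : 1 ≤ d) (V V1 V2 : Set (Finset (Fin m)))
    (hV : IsPC V) (h1 : V1 ⊆ V) (h2 : V2 ⊆ V) (hi1 : IsPC V1) (hi2 : IsPC V2)
    (hcov : V1 ∪ V2 = V)
    (hedge : ∀ u ∈ V, ∀ v ∈ V, (cubeGraph m).Adj u v →
      (u ∈ V1 ∧ v ∈ V1) ∨ (u ∈ V2 ∧ v ∈ V2))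
    (hne : (V1 ∩ V2).Nonempty) (hvc : VCdimLE V d) :
    VCdimLE (expansion V1 V2) d ↔ VCdimLE (V1 ∩ V2) (d - 1) :=
  stmt4_general m d hd V V1 V2 hV hcov hedge hvc
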